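/- arXiv:1408.2115 — 4 statements merged into one kernel-verified Lean document; each statement's English description precedes it below -/
import Mathlib

section
/- For every a > 0 and every t with 0 ≤ t ≤ a, one has Δ(t) ≥ (Δ(a)/a²)·t², where Δ(t) = t − log(1 + t). -/
/-- Δ(t) = t − log(1+t). -/
noncomputable def Delta (t : ℝ) : ℝ := t - Real.log (1 + t)

/-!
The ratio `Δ(x) / x²` equals `∫₀¹ u / (1 + x u) du`, whose integrand decreases in `x`.
Hence `Δ(x) / x²` is antitone, so on `[0, a]` it is smallest at `x = a`.
-/

open Set intervalIntegral

lemma one_add_mul_pos {x u : ℝ} (hx : -1 < x) (hu : u ∈ Icc (0 : ℝ) 1) : 0 < 1 + x * u := by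
  obtain ⟨hu0, hu1⟩ := hu
  rcases le_total 0 x with h | h <;> nlinarith

lemma intervalIntegrable_div_one_add_mul {x : ℝ} (hx : -1 < x) :
    IntervalIntegrable (fun u => u / (1 + x * u)) MeasureTheory.volume 0 1 := by
  refine ContinuousOn.intervalIntegrable (continuousOn_id.div (by fun_prop) fun u hu => ?_)
  rw [uIcc_of_le zero_le_one] at hu
  exact (one_add_mul_pos hx hu).ne'

lemma integral_div_one_add_mul {x : ℝ} (hx : -1 < x) (hx0 : x ≠ 0) :
    ∫ u in (0 : ℝ)..1, u / (1 + x * u) = Delta x / x ^ 2 := by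
  have hderiv : ∀ u ∈ uIcc (0 : ℝ) 1,
      HasDerivAt (fun u => u / x - Real.log (1 + x * u) / x ^ 2) (u / (1 + x * u)) u := by
    intro u hu
    rw [uIcc_of_le zero_le_one] at hu
    have hpos := one_add_mul_pos hx hu
    have hlin : HasDerivAt (fun u : ℝ => 1 + x * u) x u := by
      simpa using ((hasDerivAt_id u).const_mul x).const_add 1
    refine (((hasDerivAt_id u).div_const x).sub
      ((hlin.log hpos.ne').div_const (x ^ 2))).congr_deriv ?_
    field_simp
    ring
  rw [integral_eq_sub_of_hasDerivAt hderiv (intervalIntegrable_div_one_add_mul hx), Delta]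
  field_simp
  simp

lemma delta_div_sq_antitoneOn : AntitoneOn (fun x => Delta x / x ^ 2) (Ioi (-1) \ {0}) := by
  rintro s ⟨hs, hs0⟩ x ⟨hx, hx0⟩ hsx
  simp only [mem_Ioi, mem_singleton_iff] at hs hs0 hx hx0 ⊢
  rw [← integral_div_one_add_mul hs hs0, ← integral_div_one_add_mul hx hx0]
  refine integral_mono_on zero_le_one (intervalIntegrable_div_one_add_mul hx)
    (intervalIntegrable_div_one_add_mul hs) fun u hu => ?_
  have hpos := one_add_mul_pos hs hu
  gcongr <;> exact hu.1

theorem delta_quadratic_lower_interval (a t : ℝ) (ha : 0 < a) (ht0 : 0 ≤ t) (hta : t ≤ a) :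
    Delta t ≥ (Delta a / a ^ 2) * t ^ 2 := by
  rcases ht0.eq_or_lt with rfl | ht
  · simp [Delta]
  have hmem : ∀ {x : ℝ}, 0 < x → x ∈ Ioi (-1) \ {0} := fun hx =>
    ⟨mem_Ioi.2 (by linarith), hx.ne'⟩
  have hratio : Delta a / a ^ 2 ≤ Delta t / t ^ 2 :=
    delta_div_sq_antitoneOn (hmem ht) (hmem ha) hta
  calc Delta a / a ^ 2 * t ^ 2 ≤ Delta t / t ^ 2 * t ^ 2 := by gcongr
    _ = Delta t := div_mul_cancel₀ _ (by positivity)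
end

section
/- The function x ↦ Δ(√x) = √x − log(1 + √x) is concave on [0, ∞). -/
open Real Set

lemma concaveOn_Ici_of_hasDerivAt_of_antitoneOn {f f' : ℝ → ℝ} {a : ℝ}
    (hf : ContinuousOn f (Ici a)) (hf' : ∀ x, a < x → HasDerivAt f (f' x) x)
    (h_anti : AntitoneOn f' (Ioi a)) : ConcaveOn ℝ (Ici a) f := by
  refine AntitoneOn.concaveOn_of_deriv (convex_Ici a) hf ?_ ?_ <;> rw [interior_Ici]
  · exact fun x hx => (hf' x hx).differentiableAt.differentiableWithinAt
  · intro x hx y hy hxy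
    rw [(hf' x hx).deriv, (hf' y hy).deriv]
    exact h_anti hx hy hxy

lemma one_add_sqrt_pos (x : ℝ) : 0 < 1 + √x := by positivity

lemma continuous_sqrt_sub_log_one_add_sqrt : Continuous fun x => √x - log (1 + √x) :=
  continuous_sqrt.sub <| (continuous_const.add continuous_sqrt).log fun x => (one_add_sqrt_pos x).ne'

lemma hasDerivAt_sqrt_sub_log_one_add_sqrt {x : ℝ} (hx : 0 < x) :
    HasDerivAt (fun x => √x - log (1 + √x)) (2 * (1 + √x))⁻¹ x := by
  have h_sqrt := hasDerivAt_sqrt hx.ne'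
  have h_log := (h_sqrt.const_add 1).log (one_add_sqrt_pos x).ne'
  refine (h_sqrt.sub h_log).congr_deriv ?_
  field_simp
  ring

lemma antitone_inv_two_mul_one_add_sqrt : Antitone fun x : ℝ => (2 * (1 + √x))⁻¹ := by
  intro x y hxy
  dsimp only
  gcongr

theorem delta_sqrt_concave :
    ConcaveOn ℝ (Set.Ici (0 : ℝ))
      (fun x => Real.sqrt x - Real.log (1 + Real.sqrt x)) :=
  concaveOn_Ici_of_hasDerivAt_of_antitoneOn continuous_sqrt_sub_log_one_add_sqrt.continuousOn
    (fun _ hx => hasDerivAt_sqrt_sub_log_one_add_sqrt hx)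
    (antitone_inv_two_mul_one_add_sqrt.antitoneOn _)
end

section
/- Suppose D ≥ 0, W ≥ 0, I ≥ 0 and T ≥ 0 satisfy: I − 2D ≥ (√I − W)², I ≥ 2D, 2D ≥ W², and I ≥ W² + T/(4π) with T ≤ W². Then I − 2D ≥ T²/(128 π² D²) · D, i.e., (1/2)I − D ≥ T²/(256 π² D). -/
open Real

set_option maxHeartbeats 1600000 in
/-- Combining the HWI inequality, the logarithmic Sobolev inequality,
Talagrand's inequality and the sharpened Talagrand inequality (4.3) yields
a lower bound on the log-Sobolev deficit in terms of the transport cost `T`. -/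
theorem deficit_from_sharpened_talagrand (D W I T : ℝ)
    (hD : 0 ≤ D) (hW : 0 ≤ W) (hI : 0 ≤ I) (hT : 0 ≤ T)
    (hHWI : I - 2 * D ≥ (Real.sqrt I - W) ^ 2)
    (hLSI : I ≥ 2 * D)
    (hTal : 2 * D ≥ W ^ 2)
    (hSharp : I ≥ W ^ 2 + T / (4 * π))
    (hTW : T ≤ W ^ 2) :
    (1 / 2) * I - D ≥ T ^ 2 / (256 * π ^ 2 * D) := by
  have hπ : (3:ℝ) < π := Real.pi_gt_three
  have hπ0 : (0:ℝ) < π := by linarith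
  rcases eq_or_lt_of_le hT with hT0 | hT0
  · -- T = 0 case
    rw [← hT0]
    norm_num
    linarith
  rcases eq_or_lt_of_le hD with hD0 | hD0
  · -- D = 0 forces W = 0, contradicting 0 < T ≤ W²
    exfalso
    nlinarith [sq_nonneg W]
  by_contra hcon
  push_neg at hcon
  rw [lt_div_iff₀ (by positivity)] at hcon
  have hcon' : (I - 2*D) * (128 * π^2 * D) < T^2 := by nlinarith [hcon]
  have ha : 0 ≤ I - 2*D := by linarith
  -- key algebraic consequence of HWI
  have hsq : Real.sqrt I ^ 2 = I := Real.sq_sqrt hI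
  have h1 : (Real.sqrt I - W)^2 * (Real.sqrt I + W)^2 ≤ (I - 2*D) * (Real.sqrt I + W)^2 :=
    mul_le_mul_of_nonneg_right hHWI (sq_nonneg _)
  have h2 : (Real.sqrt I + W)^2 ≤ 2*(I + W^2) := by
    nlinarith [sq_nonneg (Real.sqrt I - W), hsq]
  have hkey : (I - W^2)^2 ≤ 2*(I-2*D)*(I+W^2) := by
    nlinarith [h1, mul_le_mul_of_nonneg_left h2 ha, hsq]
  -- sharpened Talagrand, cleared of denominators
  have hIW : T ≤ 4*π*(I - W^2) := by
    have h : T / (4*π) ≤ I - W^2 := by linarith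
    rw [div_le_iff₀ (by positivity)] at h
    linarith
  have hT2 : T^2 ≤ 16*π^2*(I - W^2)^2 := by
    nlinarith [mul_nonneg (by linarith : (0:ℝ) ≤ 4*π*(I-W^2) - T)
      (by linarith : (0:ℝ) ≤ 4*π*(I-W^2) + T)]
  -- smallness of the deficit a = I - 2D relative to T
  have hTT : T^2 ≤ 2*D*T := by
    have h := mul_le_mul_of_nonneg_right (show T ≤ 2*D by linarith) hT
    calc T^2 = T*T := by ring
    _ ≤ 2*D*T := h
  have haT : 64 * π^2 * (I - 2*D) < T := by
    have h2 : (2*D) * (64*π^2*(I-2*D)) < (2*D)*T := by nlinarith [hcon'.trans_le hTT]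
    exact lt_of_mul_lt_mul_left h2 (by linarith)
  -- hence I + W² < 4D
  have hfin : I + W^2 ≤ 4*D := by
    nlinarith [haT, hIW, ha, hπ0]
  -- final contradiction
  have hc1 : 16*π^2*(I - W^2)^2 ≤ 16*π^2*(2*(I-2*D)*(I+W^2)) :=
    mul_le_mul_of_nonneg_left hkey (by positivity)
  have hc2 : (I-2*D)*(I+W^2) ≤ (I-2*D)*(4*D) :=
    mul_le_mul_of_nonneg_left hfin ha
  nlinarith [hT2, hc1, hc2, hcon', sq_nonneg π]
end

section
/- Let v : ℝ → ℝ be twice continuously differentiable with v''(x) ≥ ε for all x, for some ε > 0, and let μ be the probability measure with density e^{−v}. Then the monotone rearrangement map T transporting the standard Gaussian measure γ onto μ is Lipschitz with constant at most 1/√ε, i.e., 0 ≤ T'(x) ≤ 1/√ε wherever T is differentiable. -/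
/-!
Write `f = e^{-v}`, `y = T x`, and `Φ`, `φ` for the standard Gaussian cdf and density. Since `F_μ`
is continuous, `F_μ (T x) = Φ x`, and differentiating gives `f y * T' x = φ x`. By Taylor's theorem
`v z ≥ v y + v' y (z - y) + ε (z - y)² / 2`, i.e. `f z ≤ κ φ (√ε (z - y) + c)` with
`κ = f y / φ c` and `c = v' y / √ε`: `f` lies below a Gaussian profile of variance `1 / ε` touching
it at `y`. Comparing both tails at `y` gives `Φ x ≤ (κ / √ε) Φ c` and
`1 - Φ x ≤ (κ / √ε) (1 - Φ c)`, and since the Mills ratio `(1 - Φ) / φ` is decreasing, this forces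
`φ x ≤ (κ / √ε) φ c = f y / √ε`.
-/

open MeasureTheory ProbabilityTheory Set Filter Topology Real

local notation "Φ" => cdf (gaussianReal 0 1)
local notation "φ" => gaussianPDFReal 0 1

lemma le_of_hasDerivAt_le_of_tendsto_atBot {F G F' G' : ℝ → ℝ} {l : ℝ}
    (hF : ∀ x, HasDerivAt F (F' x) x) (hG : ∀ x, HasDerivAt G (G' x) x)
    (hle : ∀ x, F' x ≤ G' x) (hFl : Tendsto F atBot (𝓝 l)) (hGl : Tendsto G atBot (𝓝 l))
    (y : ℝ) : F y ≤ G y := by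
  have hmono : Monotone (fun x => G x - F x) :=
    monotone_of_hasDerivAt_nonneg (fun x => (hG x).sub (hF x)) fun x => sub_nonneg.2 (hle x)
  have := hmono.le_of_tendsto (by simpa using hGl.sub hFl) y
  linarith

lemma le_of_hasDerivAt_le_of_tendsto_atTop {F G F' G' : ℝ → ℝ} {l : ℝ}
    (hF : ∀ x, HasDerivAt F (F' x) x) (hG : ∀ x, HasDerivAt G (G' x) x)
    (hle : ∀ x, G' x ≤ F' x) (hFl : Tendsto F atTop (𝓝 l)) (hGl : Tendsto G atTop (𝓝 l))
    (y : ℝ) : F y ≤ G y := by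
  have hmono : Monotone (fun x => F x - G x) :=
    monotone_of_hasDerivAt_nonneg (fun x => (hF x).sub (hG x)) fun x => sub_nonneg.2 (hle x)
  have := hmono.ge_of_tendsto (by simpa using hFl.sub hGl) y
  linarith

lemma deriv_eq_div_of_comp_eq {F G T : ℝ → ℝ} {a b x : ℝ} (hFT : F ∘ T = G)
    (hF : HasDerivAt F a (T x)) (hG : HasDerivAt G b x) (hT : DifferentiableAt ℝ T x)
    (ha : a ≠ 0) : deriv T x = b / a := by
  rw [eq_div_iff ha, mul_comm]
  exact (hFT ▸ hF.comp x hT.hasDerivAt).unique hG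

lemma add_deriv_mul_add_sq_le_of_le_deriv_deriv {v : ℝ → ℝ} {ε : ℝ} (hv : ContDiff ℝ 2 v)
    (hconv : ∀ x, ε ≤ deriv (deriv v) x) (y z : ℝ) :
    v y + deriv v y * (z - y) + ε / 2 * (z - y) ^ 2 ≤ v z := by
  rcases eq_or_ne y z with rfl | hyz
  · simp
  obtain ⟨w, -, hw⟩ := taylor_mean_remainder_lagrange_iteratedDeriv hyz hv.contDiffOn
  have hderiv : iteratedDerivWithin 1 v (uIcc y z) y = deriv v y := by
    rw [iteratedDerivWithin_one]
    exact (hv.differentiable two_ne_zero y).derivWithin (uniqueDiffOn_uIcc hyz y left_mem_uIcc)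
  simp only [taylorWithinEval_succ, taylor_within_zero_eval, hderiv, iteratedDeriv_succ,
    iteratedDeriv_zero] at hw
  norm_num at hw
  linarith [mul_le_mul_of_nonneg_right (hconv w) (sq_nonneg (z - y))]

noncomputable def quantile (μ : Measure ℝ) (p : ℝ) : ℝ := sInf {y | p ≤ cdf μ y}

lemma cdf_quantile {μ : Measure ℝ} [IsProbabilityMeasure μ] (hcont : Continuous (cdf μ))
    {p : ℝ} (hp0 : 0 < p) (hp1 : p < 1) : cdf μ (quantile μ p) = p := by
  set S := {y | p ≤ cdf μ y}
  obtain ⟨a, ha⟩ := ((tendsto_cdf_atBot μ).eventually_lt_const hp0).exists_forall_of_atBot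
  obtain ⟨b, hb⟩ := ((tendsto_cdf_atTop μ).eventually_const_lt hp1).exists
  have hbdd : BddBelow S := ⟨a, fun y hy => not_lt.1 fun hya => (ha y hya.le).not_ge hy⟩
  have hmem : quantile μ p ∈ S :=
    (isClosed_le continuous_const hcont).csInf_mem ⟨b, hb.le⟩ hbdd
  refine le_antisymm ?_ hmem
  have hbelow : ∀ᶠ y in 𝓝[<] quantile μ p, cdf μ y ≤ p :=
    eventually_nhdsWithin_of_forall fun y hy => le_of_lt <| not_le.1 fun hyS =>
      (csInf_le hbdd hyS).not_gt hy
  exact le_of_tendsto (hcont.continuousAt.tendsto.mono_left nhdsWithin_le_nhds) hbelow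

section Density

variable {f : ℝ → ℝ} {μ : Measure ℝ} [IsProbabilityMeasure μ]

lemma lintegral_ofReal_eq_one_of_withDensity_eq (hμ : μ = volume.withDensity fun x => ENNReal.ofReal (f x)) :
    ∫⁻ x, ENNReal.ofReal (f x) = 1 := by
  simpa [hμ] using measure_univ (μ := μ)

lemma integrable_of_withDensity_eq (hf : Measurable f) (hf0 : ∀ x, 0 ≤ f x)
    (hμ : μ = volume.withDensity fun x => ENNReal.ofReal (f x)) : Integrable f := by
  refine ⟨hf.aestronglyMeasurable, ?_⟩
  rw [hasFiniteIntegral_iff_ofReal (ae_of_all _ hf0), lintegral_ofReal_eq_one_of_withDensity_eq hμ]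
  exact ENNReal.one_lt_top

lemma integral_eq_one_of_withDensity_eq (hf : Measurable f) (hf0 : ∀ x, 0 ≤ f x)
    (hμ : μ = volume.withDensity fun x => ENNReal.ofReal (f x)) : ∫ x, f x = 1 := by
  rw [integral_eq_lintegral_of_nonneg_ae (ae_of_all _ hf0) hf.aestronglyMeasurable,
    lintegral_ofReal_eq_one_of_withDensity_eq hμ, ENNReal.toReal_one]

lemma cdf_eq_integral_Iic (hf : Measurable f) (hf0 : ∀ x, 0 ≤ f x)
    (hμ : μ = volume.withDensity fun x => ENNReal.ofReal (f x)) (y : ℝ) :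
    cdf μ y = ∫ x in Iic y, f x := by
  rw [cdf_eq_real, measureReal_def, hμ, withDensity_apply _ measurableSet_Iic,
    ← ofReal_integral_eq_lintegral_ofReal
      (integrable_of_withDensity_eq hf hf0 hμ).integrableOn (ae_of_all _ hf0),
    ENNReal.toReal_ofReal (setIntegral_nonneg measurableSet_Iic fun x _ => hf0 x)]

lemma one_sub_cdf_eq_integral_Ioi (hf : Measurable f) (hf0 : ∀ x, 0 ≤ f x)
    (hμ : μ = volume.withDensity fun x => ENNReal.ofReal (f x)) (y : ℝ) :
    1 - cdf μ y = ∫ x in Ioi y, f x := by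
  have hint := integrable_of_withDensity_eq hf hf0 hμ
  rw [← integral_eq_one_of_withDensity_eq hf hf0 hμ, cdf_eq_integral_Iic hf hf0 hμ,
    ← intervalIntegral.integral_Iic_add_Ioi hint.integrableOn hint.integrableOn, add_sub_cancel_left]

lemma hasDerivAt_cdf_of_withDensity_eq (hf : Continuous f) (hf0 : ∀ x, 0 ≤ f x)
    (hμ : μ = volume.withDensity fun x => ENNReal.ofReal (f x)) (y : ℝ) :
    HasDerivAt (cdf μ) (f y) y := by
  have hint := integrable_of_withDensity_eq hf.measurable hf0 hμ
  have hsplit : cdf μ = fun t => (∫ x in Iic 0, f x) + ∫ x in (0 : ℝ)..t, f x := by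
    ext t
    rw [cdf_eq_integral_Iic hf.measurable hf0 hμ,
      ← intervalIntegral.integral_Iic_sub_Iic hint.integrableOn hint.integrableOn,
      add_sub_cancel]
  rw [hsplit]
  exact (intervalIntegral.integral_hasDerivAt_right hint.intervalIntegrable
    hf.stronglyMeasurable.stronglyMeasurableAtFilter hf.continuousAt).const_add _

end Density

lemma cdf_tails_le_mul_of_density_le {μ ν : Measure ℝ} [IsProbabilityMeasure μ]
    [IsProbabilityMeasure ν] {f g : ℝ → ℝ} {s c κ x₀ : ℝ} (hs : 0 < s)
    (hf : ∀ x, HasDerivAt (cdf μ) (f x) x) (hg : ∀ x, HasDerivAt (cdf ν) (g x) x)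
    (hfg : ∀ x, f x ≤ κ * g (s * (x - x₀) + c)) :
    cdf μ x₀ ≤ κ / s * cdf ν c ∧ 1 - cdf μ x₀ ≤ κ / s * (1 - cdf ν c) := by
  have hA : ∀ x, HasDerivAt (fun x => s * (x - x₀) + c) s x := fun x =>
    ((((hasDerivAt_id x).sub_const x₀).const_mul s).add_const c).congr_deriv (by simp)
  have hG : ∀ x, HasDerivAt (fun x => κ / s * cdf ν (s * (x - x₀) + c))
      (κ * g (s * (x - x₀) + c)) x := fun x =>
    (((hg _).comp x (hA x)).const_mul (κ / s)).congr_deriv (by field_simp)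
  have hAbot : Tendsto (fun x => s * (x - x₀) + c) atBot atBot :=
    tendsto_atBot_add_const_right _ c
      ((tendsto_atBot_add_const_right _ (-x₀) tendsto_id).const_mul_atBot hs)
  have hAtop : Tendsto (fun x => s * (x - x₀) + c) atTop atTop :=
    tendsto_atTop_add_const_right _ c
      ((tendsto_atTop_add_const_right _ (-x₀) tendsto_id).const_mul_atTop hs)
  constructor
  · simpa using le_of_hasDerivAt_le_of_tendsto_atBot hf hG hfg (tendsto_cdf_atBot μ)
      (by simpa using ((tendsto_cdf_atBot ν).comp hAbot).const_mul (κ / s)) x₀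
  · simpa [mul_sub] using le_of_hasDerivAt_le_of_tendsto_atTop (fun x => (hf x).const_sub 1)
      (fun x => (hG x).const_sub (κ / s)) (fun x => by linarith [hfg x])
      (by simpa using (tendsto_cdf_atTop μ).const_sub 1)
      (by simpa using ((((tendsto_cdf_atTop ν).comp hAtop).const_mul (κ / s)).const_sub (κ / s)))
      x₀

lemma gaussianPDFReal_zero_one (x : ℝ) : φ x = (√(2 * π))⁻¹ * rexp (-x ^ 2 / 2) := by
  simp [gaussianPDFReal]

lemma gaussianPDFReal_zero_one_neg (x : ℝ) : φ (-x) = φ x := by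
  simp [gaussianPDFReal_zero_one]

lemma gaussianPDFReal_zero_one_div (a b : ℝ) : φ a / φ b = rexp ((b ^ 2 - a ^ 2) / 2) := by
  rw [gaussianPDFReal_zero_one, gaussianPDFReal_zero_one, mul_div_mul_left _ _ (by positivity),
    ← Real.exp_sub]
  ring_nf

lemma hasDerivAt_gaussianPDFReal_zero_one (x : ℝ) : HasDerivAt φ (-x * φ x) x := by
  have hsq : HasDerivAt (fun t : ℝ => -t ^ 2 / 2) (-x) x :=
    ((hasDerivAt_pow 2 x).fun_neg.div_const 2).congr_deriv (by ring)
  rw [funext gaussianPDFReal_zero_one]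
  exact (hsq.exp.const_mul _).congr_deriv (by ring)

lemma tendsto_gaussianPDFReal_zero_one_atTop : Tendsto φ atTop (𝓝 0) := by
  have h : Tendsto (fun x : ℝ => -x ^ 2 / 2) atTop atBot :=
    (tendsto_neg_atTop_atBot.comp (tendsto_pow_atTop two_ne_zero)).atBot_div_const two_pos
  simpa [funext gaussianPDFReal_zero_one] using (tendsto_exp_atBot.comp h).const_mul (√(2 * π))⁻¹

lemma gaussianReal_zero_one_eq_withDensity :
    gaussianReal 0 1 = volume.withDensity fun x => ENNReal.ofReal (φ x) :=
  gaussianReal_of_var_ne_zero 0 one_ne_zero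

lemma hasDerivAt_cdf_gaussianReal_zero_one (x : ℝ) : HasDerivAt Φ (φ x) x :=
  hasDerivAt_cdf_of_withDensity_eq
    (continuous_iff_continuousAt.2 fun t => (hasDerivAt_gaussianPDFReal_zero_one t).continuousAt)
    (gaussianPDFReal_nonneg 0 1) gaussianReal_zero_one_eq_withDensity x

lemma cdf_gaussianReal_zero_one_neg (x : ℝ) : Φ (-x) = 1 - Φ x := by
  have hm := measurable_gaussianPDFReal 0 1
  have h0 := gaussianPDFReal_nonneg 0 1
  rw [one_sub_cdf_eq_integral_Ioi hm h0 gaussianReal_zero_one_eq_withDensity,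
    cdf_eq_integral_Iic hm h0 gaussianReal_zero_one_eq_withDensity, ← integral_comp_neg_Ioi]
  simp_rw [gaussianPDFReal_zero_one_neg]

lemma cdf_gaussianReal_zero_one_mem_Ioo (x : ℝ) : Φ x ∈ Ioo 0 1 := by
  have hmono : StrictMono Φ := strictMono_of_hasDerivAt_pos hasDerivAt_cdf_gaussianReal_zero_one
    fun t => gaussianPDFReal_pos 0 1 t one_ne_zero
  exact ⟨(cdf_nonneg _ (x - 1)).trans_lt (hmono (by linarith)),
    (hmono (lt_add_one x)).trans_le (cdf_le_one _ _)⟩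

lemma mul_one_sub_cdf_gaussianReal_zero_one_le (x : ℝ) : x * (1 - Φ x) ≤ φ x := by
  rcases le_or_gt x 0 with hx | hx
  · nlinarith [cdf_le_one (gaussianReal 0 1) x, gaussianPDFReal_nonneg 0 1 x]
  have hderiv : ∀ t ∈ Ioi x, HasDerivAt (fun t => -φ t) (t * φ t) t := fun t _ =>
    (hasDerivAt_gaussianPDFReal_zero_one t).neg.congr_deriv (by ring)
  have hnonneg : ∀ t ∈ Ioi x, 0 ≤ t * φ t := fun t ht =>
    mul_nonneg (hx.trans ht).le (gaussianPDFReal_nonneg 0 1 t)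
  have hcont : ContinuousWithinAt (fun t => -φ t) (Ici x) x :=
    (hasDerivAt_gaussianPDFReal_zero_one x).continuousAt.neg.continuousWithinAt
  have hlim : Tendsto (fun t => -φ t) atTop (𝓝 0) := by
    simpa using tendsto_gaussianPDFReal_zero_one_atTop.neg
  have hint := integrableOn_Ioi_deriv_of_nonneg hcont hderiv hnonneg hlim
  calc x * (1 - Φ x) = ∫ t in Ioi x, x * φ t := by
        rw [one_sub_cdf_eq_integral_Ioi (measurable_gaussianPDFReal 0 1)
          (gaussianPDFReal_nonneg 0 1) gaussianReal_zero_one_eq_withDensity, integral_const_mul]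
    _ ≤ ∫ t in Ioi x, t * φ t :=
        setIntegral_mono_on ((integrable_gaussianPDFReal 0 1).const_mul x).integrableOn hint
          measurableSet_Ioi fun t ht =>
            mul_le_mul_of_nonneg_right (le_of_lt ht) (gaussianPDFReal_nonneg 0 1 t)
    _ = φ x := by
        rw [integral_Ioi_of_hasDerivAt_of_tendsto hcont hderiv hint hlim]
        ring

lemma antitone_one_sub_cdf_div_gaussianPDFReal_zero_one : Antitone fun x => (1 - Φ x) / φ x := by
  have hpos := fun x => gaussianPDFReal_pos 0 1 x one_ne_zero
  refine antitone_of_hasDerivAt_nonpos (f' := fun x => (x * (1 - Φ x) - φ x) / φ x)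
    (fun x => ?_) fun x => div_nonpos_of_nonpos_of_nonneg
      (sub_nonpos.2 (mul_one_sub_cdf_gaussianReal_zero_one_le x)) (hpos x).le
  refine (((hasDerivAt_cdf_gaussianReal_zero_one x).const_sub 1).div
    (hasDerivAt_gaussianPDFReal_zero_one x) (hpos x).ne').congr_deriv ?_
  field_simp
  ring

lemma gaussianPDFReal_zero_one_le_of_one_sub_cdf_le {x c κ : ℝ} (hxc : x ≤ c)
    (h : 1 - Φ x ≤ κ * (1 - Φ c)) : φ x ≤ κ * φ c := by
  have hmills := antitone_one_sub_cdf_div_gaussianPDFReal_zero_one hxc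
  rw [div_le_div_iff₀ (gaussianPDFReal_pos 0 1 c one_ne_zero)
    (gaussianPDFReal_pos 0 1 x one_ne_zero)] at hmills
  have htail : 0 < 1 - Φ c := sub_pos.2 (cdf_gaussianReal_zero_one_mem_Ioo c).2
  refine le_of_mul_le_mul_left ?_ htail
  calc (1 - Φ c) * φ x ≤ (1 - Φ x) * φ c := hmills
    _ ≤ κ * (1 - Φ c) * φ c := by gcongr; exact (gaussianPDFReal_pos 0 1 c one_ne_zero).le
    _ = (1 - Φ c) * (κ * φ c) := by ring

lemma gaussianPDFReal_zero_one_le_of_cdf_le {x c κ : ℝ} (hlow : Φ x ≤ κ * Φ c)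
    (hup : 1 - Φ x ≤ κ * (1 - Φ c)) : φ x ≤ κ * φ c := by
  rcases le_total x c with hxc | hcx
  · exact gaussianPDFReal_zero_one_le_of_one_sub_cdf_le hxc hup
  · simpa [gaussianPDFReal_zero_one_neg] using
      gaussianPDFReal_zero_one_le_of_one_sub_cdf_le (neg_le_neg hcx)
        (by simpa [cdf_gaussianReal_zero_one_neg] using hlow)

lemma exp_neg_le_div_mul_gaussianPDFReal {v : ℝ → ℝ} {ε s c y : ℝ} (hv : ContDiff ℝ 2 v)
    (hconv : ∀ x, ε ≤ deriv (deriv v) x) (hs : s ^ 2 = ε) (hc : s * c = deriv v y) (z : ℝ) :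
    rexp (-v z) ≤ rexp (-v y) / φ c * φ (s * (z - y) + c) := by
  have hexponent : (c ^ 2 - (s * (z - y) + c) ^ 2) / 2
      = -(ε / 2 * (z - y) ^ 2) - deriv v y * (z - y) := by
    rw [← hs, ← hc]
    ring
  rw [div_mul_eq_mul_div, mul_div_assoc, gaussianPDFReal_zero_one_div, ← exp_add, hexponent]
  exact exp_le_exp.2 (by linarith [add_deriv_mul_add_sq_le_of_le_deriv_deriv hv hconv y z])

/-- One-dimensional Caffarelli contraction: if `μ` has density `e^{−v}` with
`v'' ≥ ε > 0`, then the monotone rearrangement map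
`T(x) = F_μ^{−1}(F_γ(x))` transporting the standard Gaussian `γ` onto `μ`
satisfies `0 ≤ T' ≤ 1/√ε` wherever `T` is differentiable. -/
theorem monotone_transport_lipschitz
    (ε : ℝ) (hε : 0 < ε) (v : ℝ → ℝ) (hv : ContDiff ℝ 2 v)
    (hconv : ∀ x, ε ≤ deriv (deriv v) x)
    (μ : Measure ℝ)
    (hμ : μ = volume.withDensity fun x => ENNReal.ofReal (Real.exp (-v x)))
    [IsProbabilityMeasure μ]
    (T : ℝ → ℝ)
    (hT : ∀ x, T x = sInf {y : ℝ | cdf (gaussianReal 0 1) x ≤ cdf μ y}) :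
    ∀ x, DifferentiableAt ℝ T x → 0 ≤ deriv T x ∧ deriv T x ≤ 1 / Real.sqrt ε := by
  intro x hTx
  have hf : ∀ z, HasDerivAt (cdf μ) (rexp (-v z)) z :=
    hasDerivAt_cdf_of_withDensity_eq (by fun_prop) (fun z => (exp_pos _).le) hμ
  have hcdfT : cdf μ ∘ T = Φ := funext fun t => by
    rw [Function.comp_apply, hT]
    exact cdf_quantile (continuous_iff_continuousAt.2 fun z => (hf z).continuousAt)
      (cdf_gaussianReal_zero_one_mem_Ioo t).1 (cdf_gaussianReal_zero_one_mem_Ioo t).2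
  set y := T x
  set s := √ε
  set c := deriv v y / s
  have hs : 0 < s := sqrt_pos.2 hε
  have hE : 0 < rexp (-v y) := exp_pos _
  have htails := cdf_tails_le_mul_of_density_le hs hf hasDerivAt_cdf_gaussianReal_zero_one
    (exp_neg_le_div_mul_gaussianPDFReal (y := y) (c := c) hv hconv (sq_sqrt hε.le)
      (mul_div_cancel₀ _ hs.ne'))
  rw [show cdf μ y = Φ x from congrFun hcdfT x] at htails
  have hφx : φ x * s ≤ rexp (-v y) := by
    rw [← le_div_iff₀ hs]
    calc φ x ≤ rexp (-v y) / φ c / s * φ c :=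
          gaussianPDFReal_zero_one_le_of_cdf_le htails.1 htails.2
      _ = rexp (-v y) / s := by field_simp [(gaussianPDFReal_pos 0 1 c one_ne_zero).ne']
  rw [deriv_eq_div_of_comp_eq hcdfT (hf y) (hasDerivAt_cdf_gaussianReal_zero_one x) hTx hE.ne',
    div_le_div_iff₀ hE hs, one_mul]
  exact ⟨div_nonneg (gaussianPDFReal_nonneg 0 1 x) hE.le, hφx⟩
end
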